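/- Let n ≥ 1 and let t be a full binary tree with n leaves. Then the 2^n × 2 matrix C(t), defined recursively using leaf-count ratios, satisfies C(t)|1⟩ = |W_n⟩. -/

import Mathlib

/-! Both columns of `C(t)` are computed by induction on `t`. Since `F_p|0⟩ = |00⟩`, the column
`C(t)|0⟩` is `|0…0⟩`. Since `F_p|1⟩ = √p|01⟩ + √(1-p)|10⟩`, the column `C(t)|1⟩` satisfies the
recursion that the W-state satisfies along any cut `n = n₁ + n₂`:
`|W_n⟩ = √(n₁/n) |W_{n₁}⟩|0…0⟩ + √(n₂/n) |0…0⟩|W_{n₂}⟩`. -/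

/-- A full binary tree: either a leaf or an ordered pair of full binary
trees. -/
inductive BTree where
  | leaf
  | node (t₁ t₂ : BTree)

namespace BTree

/-- Number of leaves. -/
def leaves : BTree → ℕ
  | .leaf => 1
  | .node t₁ t₂ => t₁.leaves + t₂.leaves

end BTree

/-- The `4 × 2` isometry `F_p = |00⟩⟨0| + √p |01⟩⟨1| + √(1-p) |10⟩⟨1|`,
with its output index pair `(b₁, b₂)` encoding the bitstring `b₁b₂`. -/
noncomputable def Fp (p : ℝ) : Bool × Bool → Bool → ℂ
  | (false, false), false => 1
  | (false, true), true => ((Real.sqrt p : ℝ) : ℂ)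
  | (true, false), true => ((Real.sqrt (1 - p) : ℝ) : ℂ)
  | _, _ => 0

/-- The `2^{ℓ(t)} × 2` matrix `C(t)`, built recursively using leaf-count
ratios: `C(⊥)` is the `2 × 2` identity, and
`C(t₁, t₂) = (C(t₁) ⊗ C(t₂)) · F_p` with `p = ℓ(t₂)/ℓ(t)` on a node. -/
noncomputable def Ckt : (t : BTree) → (Fin t.leaves → Bool) → Bool → ℂ
  | .leaf => fun x i => if x ⟨0, Nat.one_pos⟩ = i then 1 else 0
  | .node t₁ t₂ => fun x i =>
      ∑ b : Bool × Bool,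
        Ckt t₁ (fun j => x (Fin.castAdd t₂.leaves j)) b.1 *
        Ckt t₂ (fun j => x (Fin.natAdd t₁.leaves j)) b.2 *
        Fp ((t₂.leaves : ℝ) / ((t₁.leaves : ℝ) + (t₂.leaves : ℝ))) b i

/-- The computational basis vector of `ℂ^{2^n}` indexed by the bitstring `x`. -/
def basisState {n : ℕ} (x : Fin n → Bool) : (Fin n → Bool) → ℂ :=
  fun y => if y = x then 1 else 0

/-- The `n`-qubit uniform W-state `|W_n⟩ = (1/√n) Σ_k |e_k⟩ ∈ ℂ^{2^n}`. -/
noncomputable def uniformW (n : ℕ) : (Fin n → Bool) → ℂ :=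
  fun y => ((Real.sqrt n : ℝ) : ℂ)⁻¹ *
    ∑ k : Fin n, basisState (fun i => decide (i = k)) y

namespace BTree

lemma leaves_pos : ∀ t : BTree, 0 < t.leaves
  | leaf => Nat.one_pos
  | node t₁ _ => Nat.add_pos_left (leaves_pos t₁) _

end BTree

lemma basisState_fin_one (x y : Fin 1 → Bool) :
    basisState y x = if x 0 = y 0 then 1 else 0 := by
  simp only [basisState, funext_iff, Fin.forall_fin_one]

lemma uniformW_one (x : Fin 1 → Bool) : uniformW 1 x = if x 0 = true then 1 else 0 := by
  simp only [uniformW, Nat.cast_one, Real.sqrt_one, Complex.ofReal_one, inv_one, one_mul,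
    Fin.sum_univ_one, basisState_fin_one, decide_true]

section Split

variable {n m : ℕ}

lemma basisState_eq_mul (x y : Fin (n + m) → Bool) :
    basisState y x =
      basisState (fun j => y (Fin.castAdd m j)) (fun j => x (Fin.castAdd m j)) *
        basisState (fun j => y (Fin.natAdd n j)) (fun j => x (Fin.natAdd n j)) := by
  simp only [basisState, ite_zero_mul_ite_zero, one_mul, funext_iff, Fin.forall_fin_add]

lemma sum_basisState_single_add (x : Fin (n + m) → Bool) :
    ∑ k : Fin (n + m), basisState (fun i => decide (i = k)) x =
      basisState (fun _ => false) (fun j => x (Fin.castAdd m j)) *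
          ∑ k : Fin m, basisState (fun i => decide (i = k)) (fun j => x (Fin.natAdd n j)) +
        (∑ k : Fin n, basisState (fun i => decide (i = k)) (fun j => x (Fin.castAdd m j))) *
          basisState (fun _ => false) (fun j => x (Fin.natAdd n j)) := by
  rw [Fin.sum_univ_add, add_comm, Finset.mul_sum, Finset.sum_mul]
  congr 1 <;> refine Finset.sum_congr rfl fun k _ => ?_ <;> rw [basisState_eq_mul] <;>
    congr 2 <;> funext j <;> simp [Fin.ext_iff] <;> omega

lemma uniformW_add (hn : 0 < n) (hm : 0 < m) (x : Fin (n + m) → Bool) :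
    uniformW (n + m) x =
      uniformW n (fun j => x (Fin.castAdd m j)) *
          basisState (fun _ => false) (fun j => x (Fin.natAdd n j)) *
          ((√((n : ℝ) / (n + m)) : ℝ) : ℂ) +
        basisState (fun _ => false) (fun j => x (Fin.castAdd m j)) *
          uniformW m (fun j => x (Fin.natAdd n j)) *
          ((√((m : ℝ) / (n + m)) : ℝ) : ℂ) := by
  have hn' : ((√(n : ℝ) : ℝ) : ℂ) ≠ 0 := by simpa using hn.ne'
  have hm' : ((√(m : ℝ) : ℝ) : ℂ) ≠ 0 := by simpa using hm.ne'
  rw [Real.sqrt_div n.cast_nonneg, Real.sqrt_div m.cast_nonneg]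
  simp only [uniformW, Nat.cast_add, sum_basisState_single_add, Complex.ofReal_div]
  field_simp
  ring

end Split

lemma Ckt_leaf (x : Fin 1 → Bool) (i : Bool) : Ckt .leaf x i = if x 0 = i then 1 else 0 := rfl

lemma Ckt_node_false (t₁ t₂ : BTree) (x : Fin (t₁.leaves + t₂.leaves) → Bool) :
    Ckt (.node t₁ t₂) x false =
      Ckt t₁ (fun j => x (Fin.castAdd t₂.leaves j)) false *
        Ckt t₂ (fun j => x (Fin.natAdd t₁.leaves j)) false := by
  simp only [Ckt, Fintype.sum_prod_type, Fintype.sum_bool, Fp, mul_zero, mul_one, zero_add]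

lemma Ckt_node_true (t₁ t₂ : BTree) (x : Fin (t₁.leaves + t₂.leaves) → Bool) :
    Ckt (.node t₁ t₂) x true =
      Ckt t₁ (fun j => x (Fin.castAdd t₂.leaves j)) true *
          Ckt t₂ (fun j => x (Fin.natAdd t₁.leaves j)) false *
          ((√(1 - (t₂.leaves : ℝ) / (t₁.leaves + t₂.leaves)) : ℝ) : ℂ) +
        Ckt t₁ (fun j => x (Fin.castAdd t₂.leaves j)) false *
          Ckt t₂ (fun j => x (Fin.natAdd t₁.leaves j)) true *
          ((√((t₂.leaves : ℝ) / (t₁.leaves + t₂.leaves)) : ℝ) : ℂ) := by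
  simp only [Ckt, Fintype.sum_prod_type, Fintype.sum_bool, Fp, mul_zero, zero_add, add_zero]

lemma Ckt_false (t : BTree) (x : Fin t.leaves → Bool) :
    Ckt t x false = basisState (fun _ => false) x := by
  induction t with
  | leaf => exact (Ckt_leaf x false).trans (basisState_fin_one x (fun _ => false)).symm
  | node t₁ t₂ ih₁ ih₂ =>
    refine (Ckt_node_false t₁ t₂ x).trans ?_
    rw [ih₁, ih₂]
    exact (basisState_eq_mul x (fun _ => false)).symm

/-- For any full binary tree `t` with `n ≥ 1` leaves, the
matrix `C(t)` (built from leaf-count ratios) satisfies `C(t) |1⟩ = |W_n⟩`. -/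
theorem Ckt_one_eq_uniformW (t : BTree) :
    (fun x => Ckt t x true) = uniformW t.leaves := by
  funext x
  induction t with
  | leaf => exact (Ckt_leaf x true).trans (uniformW_one x).symm
  | node t₁ t₂ ih₁ ih₂ =>
    have hp : 1 - (t₂.leaves : ℝ) / (t₁.leaves + t₂.leaves) =
        t₁.leaves / (t₁.leaves + t₂.leaves) := by
      have hpos := add_pos (Nat.cast_pos.2 t₁.leaves_pos) (Nat.cast_pos (α := ℝ).2 t₂.leaves_pos)
      rw [one_sub_div hpos.ne', add_sub_cancel_right]
    refine (Ckt_node_true t₁ t₂ x).trans ?_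
    rw [Ckt_false, Ckt_false, ih₁, ih₂, hp]
    exact (uniformW_add t₁.leaves_pos t₂.leaves_pos x).symm
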